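/- Every shift of the logistic distribution is a fixed point of T²: for any t ∈ ℝ, T²(θ_t F*) = θ_t F*, where F*(x) = 1/(1+e^x). -/

import Mathlib

/-!
The shifted logistic tail `u ↦ F*(u - s)` has the explicit antiderivative `-log (1 + e^{s-u})`,
so `∫_{-x}^∞ F*(u - s) du = log (1 + e^{s+x})` and `T (θ_s F*) = θ_{-s} F*`.
Applying this twice returns `θ_s F*`.
-/

open MeasureTheory Set Filter

/-- The logistic tail distribution function. -/
noncomputable def Fstar (x : ℝ) : ℝ := 1 / (1 + Real.exp x)

/-- The BP operator `T`: `(TF)(x) = exp (-∫_{-x}^∞ F)`, with the convention `exp (-∞) = 0`. -/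
noncomputable def Tmap (F : ℝ → ℝ) (x : ℝ) : ℝ :=
  if (∫⁻ u in Ioi (-x), ENNReal.ofReal (F u)) = ⊤ then 0
  else Real.exp (-((∫⁻ u in Ioi (-x), ENNReal.ofReal (F u)).toReal))

/-- The hat transform of a tail distribution function. -/
noncomputable def hatT (F : ℝ → ℝ) (x : ℝ) : ℝ := x + Real.log (F x / (1 - F x))

lemma Fstar_pos (x : ℝ) : 0 < Fstar x := by
  unfold Fstar; positivity

lemma continuous_Fstar : Continuous Fstar :=
  continuous_const.div (by fun_prop) fun x => by positivity

lemma Fstar_le_exp_neg (x : ℝ) : Fstar x ≤ Real.exp (-x) := by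
  rw [Fstar, div_le_iff₀ (by positivity), mul_add, mul_one, ← Real.exp_add, neg_add_cancel,
    Real.exp_zero]
  linarith [Real.exp_pos (-x)]

lemma hasDerivAt_neg_log_one_add_exp_neg (x : ℝ) :
    HasDerivAt (fun x => -Real.log (1 + Real.exp (-x))) (Fstar x) x := by
  have h := (((hasDerivAt_neg x).exp).const_add 1).log (by positivity) |>.neg
  refine h.congr_deriv ?_
  have hmul : Real.exp (-x) * Real.exp x = 1 := by
    rw [← Real.exp_add, neg_add_cancel, Real.exp_zero]
  unfold Fstar
  field_simp
  linarith

lemma tendsto_neg_log_one_add_exp_neg_atTop :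
    Tendsto (fun x => -Real.log (1 + Real.exp (-x))) atTop (nhds 0) := by
  have h : Tendsto (fun x => -Real.log (1 + Real.exp (-x))) atTop (nhds (-Real.log (1 + 0))) :=
    ((Real.continuousAt_log (by norm_num)).tendsto.comp
      (tendsto_const_nhds.add (Real.tendsto_exp_atBot.comp tendsto_neg_atTop_atBot))).neg
  simpa using h

lemma integrableOn_Fstar_sub_Ioi (s a : ℝ) : IntegrableOn (fun u => Fstar (u - s)) (Ioi a) := by
  refine ((exp_neg_integrableOn_Ioi a one_pos).const_mul (Real.exp s)).mono'
    (continuous_Fstar.comp (continuous_sub_right s)).aestronglyMeasurable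
    (Eventually.of_forall fun u => ?_)
  calc ‖Fstar (u - s)‖ = Fstar (u - s) := Real.norm_of_nonneg (Fstar_pos _).le
    _ ≤ Real.exp (-(u - s)) := Fstar_le_exp_neg _
    _ = Real.exp s * Real.exp (-1 * u) := by rw [← Real.exp_add]; ring_nf

lemma integral_Fstar_sub_Ioi (s a : ℝ) :
    ∫ u in Ioi a, Fstar (u - s) = Real.log (1 + Real.exp (s - a)) := by
  rw [integral_Ioi_of_hasDerivAt_of_tendsto'
    (fun u _ => (hasDerivAt_neg_log_one_add_exp_neg (u - s)).comp_sub_const u s)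
    (integrableOn_Fstar_sub_Ioi s a)
    (tendsto_neg_log_one_add_exp_neg_atTop.comp (tendsto_atTop_add_const_right _ (-s) tendsto_id))]
  simp

lemma Tmap_eq_exp_neg_integral {F : ℝ → ℝ} {x : ℝ} (hF : IntegrableOn F (Ioi (-x)))
    (hF_nonneg : ∀ u, 0 ≤ F u) : Tmap F x = Real.exp (-∫ u in Ioi (-x), F u) := by
  rw [Tmap, ← ofReal_integral_eq_lintegral_ofReal hF (Eventually.of_forall hF_nonneg),
    if_neg ENNReal.ofReal_ne_top, ENNReal.toReal_ofReal (integral_nonneg hF_nonneg)]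

lemma Tmap_Fstar_sub (s x : ℝ) : Tmap (fun y => Fstar (y - s)) x = Fstar (x + s) := by
  rw [Tmap_eq_exp_neg_integral (integrableOn_Fstar_sub_Ioi s (-x)) fun u => (Fstar_pos _).le,
    integral_Fstar_sub_Ioi, Real.exp_neg, Real.exp_log (by positivity), Fstar, one_div,
    sub_neg_eq_add, add_comm s]

theorem Tmap_sq_fixed_shifted_logistic (t : ℝ) :
    ∀ x, Tmap (Tmap (fun y => Fstar (y - t))) x = Fstar (x - t) := by
  intro x
  have h : Tmap (fun y => Fstar (y - t)) = fun y => Fstar (y - -t) := by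
    funext y
    rw [Tmap_Fstar_sub, sub_neg_eq_add]
  rw [h, Tmap_Fstar_sub, sub_eq_add_neg]
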